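/- arXiv:1701.08246 — 3 statements merged into one kernel-verified Lean document; each statement's English description precedes it below -/
import Mathlib

section
/- Let $(u_k)$ and $(v_k)$ be sequences of nonzero vectors in a real inner product space. If both normalized sequences $u_k/\|u_k\|$ and $v_k/\|v_k\|$ converge to the same unit vector $u$, then $u_k + v_k \ne 0$ for all sufficiently large $k$ and the sequence $(u_k+v_k)/\|u_k+v_k\|$ also converges to $u$. -/
/-!
Put `s = ‖x‖ + ‖y‖`. The vector `s⁻¹ • (x + y)` is the convex combination of the two unit
vectors `‖x‖⁻¹ • x` and `‖y‖⁻¹ • y` with weights `‖x‖ / s` and `‖y‖ / s`, so its distance to `u`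
is at most the sum of their distances to `u`; hence it tends to `u`. As `u ≠ 0` it is eventually
nonzero, and normalizing it gives the same vector as normalizing `x + y`, since the two differ by
the positive factor `s⁻¹`. Normalization is continuous away from `0` and fixes the unit vector `u`.
-/

open Filter Topology

section

variable {E : Type*} [NormedAddCommGroup E] [NormedSpace ℝ E]

lemma norm_smul_inv_norm_smul (x : E) : ‖x‖ • ‖x‖⁻¹ • x = x := by
  rcases eq_or_ne x 0 with rfl | hx
  · simp
  · exact smul_inv_smul₀ (norm_ne_zero_iff.mpr hx) x

lemma inv_norm_smul_smul_of_pos {c : ℝ} (hc : 0 < c) (z : E) :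
    ‖c • z‖⁻¹ • (c • z) = ‖z‖⁻¹ • z := by
  rw [norm_smul, Real.norm_of_nonneg hc.le, smul_smul]
  congr 1
  field_simp

lemma norm_inv_norm_add_smul_add_sub_le (x y u : E) :
    ‖(‖x‖ + ‖y‖)⁻¹ • (x + y) - u‖ ≤ ‖‖x‖⁻¹ • x - u‖ + ‖‖y‖⁻¹ • y - u‖ := by
  set a := ‖‖x‖⁻¹ • x - u‖
  set b := ‖‖y‖⁻¹ • y - u‖
  rcases (add_nonneg (norm_nonneg x) (norm_nonneg y)).eq_or_lt with hs | hs
  · have hx : x = 0 := norm_eq_zero.mp (by linarith [norm_nonneg x, norm_nonneg y])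
    have hy : y = 0 := norm_eq_zero.mp (by linarith [norm_nonneg x, norm_nonneg y])
    simp [a, b, hx, hy]
  have hsplit : x + y - (‖x‖ + ‖y‖) • u = ‖x‖ • (‖x‖⁻¹ • x - u) + ‖y‖ • (‖y‖⁻¹ • y - u) := by
    rw [smul_sub, smul_sub, norm_smul_inv_norm_smul, norm_smul_inv_norm_smul, add_smul]
    abel
  calc ‖(‖x‖ + ‖y‖)⁻¹ • (x + y) - u‖
      = (‖x‖ + ‖y‖)⁻¹ * ‖x + y - (‖x‖ + ‖y‖) • u‖ := by
        rw [← norm_smul_of_nonneg (inv_nonneg.mpr hs.le), smul_sub, smul_smul,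
          inv_mul_cancel₀ hs.ne', one_smul]
    _ ≤ (‖x‖ + ‖y‖)⁻¹ * (‖x‖ * a + ‖y‖ * b) := by
        rw [hsplit]
        gcongr
        refine (norm_add_le _ _).trans_eq ?_
        rw [norm_smul_of_nonneg (norm_nonneg x), norm_smul_of_nonneg (norm_nonneg y)]
    _ ≤ a + b := by
        rw [inv_mul_le_iff₀ hs]
        nlinarith [norm_nonneg x, norm_nonneg y, norm_nonneg (‖x‖⁻¹ • x - u),
          norm_nonneg (‖y‖⁻¹ • y - u)]

lemma tendsto_inv_norm_add_smul_add {ι : Type*} {l : Filter ι} {f g : ι → E} {u : E}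
    (hf : Tendsto (fun i => ‖f i‖⁻¹ • f i) l (𝓝 u))
    (hg : Tendsto (fun i => ‖g i‖⁻¹ • g i) l (𝓝 u)) :
    Tendsto (fun i => (‖f i‖ + ‖g i‖)⁻¹ • (f i + g i)) l (𝓝 u) := by
  rw [tendsto_iff_norm_sub_tendsto_zero] at hf hg ⊢
  exact squeeze_zero (fun _ => norm_nonneg _)
    (fun i => norm_inv_norm_add_smul_add_sub_le (f i) (g i) u) (by simpa using hf.add hg)

end

theorem stmt1_general {E : Type*} [NormedAddCommGroup E] [InnerProductSpace ℝ E]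
    (u : E) (hu : ‖u‖ = 1) (uk vk : ℕ → E)
    (h1 : Tendsto (fun k => ‖uk k‖⁻¹ • uk k) atTop (𝓝 u))
    (h2 : Tendsto (fun k => ‖vk k‖⁻¹ • vk k) atTop (𝓝 u)) :
    (∀ᶠ k in atTop, uk k + vk k ≠ 0) ∧
    Tendsto (fun k => ‖uk k + vk k‖⁻¹ • (uk k + vk k)) atTop (𝓝 u) := by
  have hu0 : u ≠ 0 := norm_ne_zero_iff.mp (by simp [hu])
  have hw := tendsto_inv_norm_add_smul_add h1 h2
  have hw0 : ∀ᶠ k in atTop, (‖uk k‖ + ‖vk k‖)⁻¹ • (uk k + vk k) ≠ 0 := hw.eventually_ne hu0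
  have hpos : ∀ᶠ k in atTop, 0 < (‖uk k‖ + ‖vk k‖)⁻¹ := hw0.mono fun k hk =>
    (inv_nonneg.mpr (by positivity)).lt_of_ne' (left_ne_zero_of_smul hk)
  refine ⟨hw0.mono fun k hk => right_ne_zero_of_smul hk, ?_⟩
  have hnormalized := (hw.norm.inv₀ (norm_ne_zero_iff.mpr hu0)).smul hw
  rw [hu, inv_one, one_smul] at hnormalized
  exact hnormalized.congr' (hpos.mono fun k hk => inv_norm_smul_smul_of_pos hk _)

theorem stmt1 {E : Type*} [NormedAddCommGroup E] [InnerProductSpace ℝ E]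
    (u : E) (hu : ‖u‖ = 1) (uk vk : ℕ → E)
    (huk : ∀ k, uk k ≠ 0) (hvk : ∀ k, vk k ≠ 0)
    (h1 : Tendsto (fun k => ‖uk k‖⁻¹ • uk k) atTop (𝓝 u))
    (h2 : Tendsto (fun k => ‖vk k‖⁻¹ • vk k) atTop (𝓝 u)) :
    (∀ᶠ k in atTop, uk k + vk k ≠ 0) ∧
    Tendsto (fun k => ‖uk k + vk k‖⁻¹ • (uk k + vk k)) atTop (𝓝 u) :=
  stmt1_general u hu uk vk h1 h2
end

section
/- Let $u$ and $v$ be nonzero vectors in a real inner product space. Then $\frac{\|u+v\|}{\|u\|+\|v\|} \ge \frac{1}{2}\left\|\frac{u}{\|u\|} + \frac{v}{\|v\|}\right\|$. -/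
/-!
Write `x = u / ‖u‖` and `y = v / ‖v‖`. Then
`u + v = ((‖u‖ + ‖v‖) / 2) • (x + y) + ((‖u‖ - ‖v‖) / 2) • (x - y)`,
and `x + y ⟂ x - y` because `x` and `y` have the same norm, so Pythagoras gives
`‖u + v‖ ≥ (‖u‖ + ‖v‖) / 2 * ‖x + y‖`.
-/

section

variable {E : Type*} [NormedAddCommGroup E] [InnerProductSpace ℝ E]

theorem norm_le_norm_add_of_real_inner_eq_zero {x y : E} (h : inner ℝ x y = 0) :
    ‖x‖ ≤ ‖x + y‖ := by
  refine (mul_self_le_mul_self_iff (norm_nonneg _) (norm_nonneg _)).2 ?_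
  rw [norm_add_sq_eq_norm_sq_add_norm_sq_real h]
  exact le_add_of_nonneg_right (mul_self_nonneg _)

theorem abs_add_div_two_mul_norm_add_le_norm_smul_add_smul {x y : E} (h : ‖x‖ = ‖y‖)
    (a b : ℝ) : |a + b| / 2 * ‖x + y‖ ≤ ‖a • x + b • y‖ := by
  have horth : inner ℝ (((a + b) / 2) • (x + y)) (((a - b) / 2) • (x - y)) = 0 := by
    rw [real_inner_smul_left, real_inner_smul_right, (real_inner_add_sub_eq_zero_iff x y).2 h]
    ring
  calc |a + b| / 2 * ‖x + y‖ = ‖((a + b) / 2) • (x + y)‖ := by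
        rw [norm_smul, Real.norm_eq_abs, abs_div, abs_two]
    _ ≤ ‖((a + b) / 2) • (x + y) + ((a - b) / 2) • (x - y)‖ :=
        norm_le_norm_add_of_real_inner_eq_zero horth
    _ = ‖a • x + b • y‖ := by congr 1; module

end

theorem stmt2 {E : Type*} [NormedAddCommGroup E] [InnerProductSpace ℝ E]
    (u v : E) (hu : u ≠ 0) (hv : v ≠ 0) :
    ‖u + v‖ / (‖u‖ + ‖v‖) ≥ (1 / 2) * ‖‖u‖⁻¹ • u + ‖v‖⁻¹ • v‖ := by
  have hpos : 0 < ‖u‖ + ‖v‖ := add_pos (norm_pos_iff.2 hu) (norm_pos_iff.2 hv)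
  have hunit : ‖‖u‖⁻¹ • u‖ = ‖‖v‖⁻¹ • v‖ := by
    simp [norm_smul, hu, hv]
  have key := abs_add_div_two_mul_norm_add_le_norm_smul_add_smul hunit ‖u‖ ‖v‖
  rw [smul_inv_smul₀ (norm_ne_zero_iff.2 hu), smul_inv_smul₀ (norm_ne_zero_iff.2 hv),
    abs_of_pos hpos] at key
  rw [ge_iff_le, le_div_iff₀ hpos]
  linarith
end

section
/- Let $C$ be a nonempty closed subset of $X\times X$ for a Euclidean space $X$ such that $(t_1 v_1, t_2 v_2)\in C$ whenever $(v_1,v_2)\in C$ and $t_1,t_2>0$. Define $r = \min\{\|v_1+v_2\| : (v_1,v_2)\in C,\ \|v_1\|+\|v_2\|=1\}$ and $s = \min\{\|v_1+v_2\| : (v_1,v_2)\in C,\ \|v_1\|=\|v_2\|=1\}$ (with the conventions that a minimum over the empty set equals $1$ for $r$ and $2$ for $s$). Assume $C$ contains a pair $(v_1,v_2)$ with $v_1\ne 0$ and $v_2\ne 0$. Then $r = \frac{1}{2} s$. -/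
/-!
If `‖u‖ = ‖v‖` then `u + v ⟂ u - v`, so for `a + b = 1` Pythagoras applied to
`a • u + b • v = ½ (u + v) + ½ (a - b) (u - v)` gives `‖u + v‖ ≤ 2 ‖a • u + b • v‖`.
Writing a pair with `‖v₁‖ + ‖v₂‖ = 1` as `‖v₁‖ u₁ + ‖v₂‖ u₂` with unit vectors `u₁, u₂`
(allowed since `C` is invariant under independent positive scaling) shows `r ≥ s / 2`; a pair
with a zero component has value `1`, and `1 ≥ s / 2` as soon as some pair of `C` has two
nonzero components. Halving a pair of unit vectors shows `r ≤ s / 2`.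
-/

open scoped Pointwise

section

variable {X : Type*} [NormedAddCommGroup X]

theorem norm_add_le_two_mul_norm_smul_add_smul [InnerProductSpace ℝ X] {u v : X}
    (huv : ‖u‖ = ‖v‖) {a b : ℝ} (hab : a + b = 1) : ‖u + v‖ ≤ 2 * ‖a • u + b • v‖ := by
  have hdecomp : a • u + b • v = (1 / 2 : ℝ) • (u + v) + ((a - b) / 2) • (u - v) := by
    rw [show (1 / 2 : ℝ) = (a + b) / 2 by rw [hab]]
    module
  have horth : inner ℝ ((1 / 2 : ℝ) • (u + v)) (((a - b) / 2) • (u - v)) = 0 := by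
    rw [real_inner_smul_left, real_inner_smul_right,
      (real_inner_add_sub_eq_zero_iff u v).2 huv, mul_zero, mul_zero]
  have hpyth := norm_add_sq_eq_norm_sq_add_norm_sq_real horth
  rw [← hdecomp, norm_smul, Real.norm_of_nonneg (by norm_num)] at hpyth
  nlinarith [norm_nonneg (u + v), norm_nonneg (a • u + b • v),
    mul_self_nonneg ‖((a - b) / 2) • (u - v)‖]

def IsBiCone [Module ℝ X] (C : Set (X × X)) : Prop :=
  ∀ p ∈ C, ∀ t₁ t₂ : ℝ, 0 < t₁ → 0 < t₂ → (t₁ • p.1, t₂ • p.2) ∈ C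

def normSumOnSimplex (C : Set (X × X)) : Set ℝ :=
  {r | ∃ p ∈ C, ‖p.1‖ + ‖p.2‖ = 1 ∧ r = ‖p.1 + p.2‖}

def normSumOnSpheres (C : Set (X × X)) : Set ℝ :=
  {r | ∃ p ∈ C, ‖p.1‖ = 1 ∧ ‖p.2‖ = 1 ∧ r = ‖p.1 + p.2‖}

theorem le_two_of_mem_normSumOnSpheres {C : Set (X × X)} {y : ℝ}
    (hy : y ∈ normSumOnSpheres C) : y ≤ 2 := by
  obtain ⟨p, -, h₁, h₂, rfl⟩ := hy
  calc ‖p.1 + p.2‖ ≤ ‖p.1‖ + ‖p.2‖ := norm_add_le _ _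
    _ = 2 := by rw [h₁, h₂]; norm_num

namespace IsBiCone

variable {C : Set (X × X)}

theorem exists_unit_pair [NormedSpace ℝ X] (hC : IsBiCone C) {p : X × X} (hp : p ∈ C)
    (h₁ : p.1 ≠ 0) (h₂ : p.2 ≠ 0) :
    ∃ u ∈ C, ‖u.1‖ = 1 ∧ ‖u.2‖ = 1 ∧ p.1 + p.2 = ‖p.1‖ • u.1 + ‖p.2‖ • u.2 :=
  ⟨(‖p.1‖⁻¹ • p.1, ‖p.2‖⁻¹ • p.2),
    hC p hp _ _ (inv_pos.2 (norm_pos_iff.2 h₁)) (inv_pos.2 (norm_pos_iff.2 h₂)),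
    norm_smul_inv_norm h₁, norm_smul_inv_norm h₂,
    by rw [smul_inv_smul₀ (norm_ne_zero_iff.2 h₁), smul_inv_smul₀ (norm_ne_zero_iff.2 h₂)]⟩

theorem half_smul_normSumOnSpheres_subset [NormedSpace ℝ X] (hC : IsBiCone C) :
    (1 / 2 : ℝ) • normSumOnSpheres C ⊆ normSumOnSimplex C := by
  rintro _ ⟨_, ⟨p, hp, h₁, h₂, rfl⟩, rfl⟩
  refine ⟨((1 / 2 : ℝ) • p.1, (1 / 2 : ℝ) • p.2), hC p hp _ _ (by norm_num) (by norm_num),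
    ?_, ?_⟩
  · simp only [norm_smul, h₁, h₂]
    norm_num
  · rw [← smul_add, norm_smul, Real.norm_of_nonneg (by norm_num)]
    rfl

theorem exists_mem_normSumOnSpheres_le_two_mul [InnerProductSpace ℝ X] (hC : IsBiCone C)
    (hnz : ∃ p ∈ C, p.1 ≠ 0 ∧ p.2 ≠ 0) {x : ℝ} (hx : x ∈ normSumOnSimplex C) :
    ∃ y ∈ normSumOnSpheres C, y ≤ 2 * x := by
  obtain ⟨q, hq, hsum, rfl⟩ := hx
  by_cases hdeg : q.1 = 0 ∨ q.2 = 0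
  · obtain ⟨p, hp, hp₁, hp₂⟩ := hnz
    obtain ⟨u, hu, hu₁, hu₂, -⟩ := hC.exists_unit_pair hp hp₁ hp₂
    have hy : ‖u.1 + u.2‖ ∈ normSumOnSpheres C := ⟨u, hu, hu₁, hu₂, rfl⟩
    refine ⟨_, hy, (le_two_of_mem_normSumOnSpheres hy).trans ?_⟩
    rcases hdeg with h | h <;> simp only [h, norm_zero, zero_add, add_zero] at hsum ⊢ <;>
      linarith
  · push Not at hdeg
    obtain ⟨u, hu, hu₁, hu₂, hq_eq⟩ := hC.exists_unit_pair hq hdeg.1 hdeg.2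
    refine ⟨_, ⟨u, hu, hu₁, hu₂, rfl⟩, ?_⟩
    rw [hq_eq]
    exact norm_add_le_two_mul_norm_smul_add_smul (hu₁.trans hu₂.symm) hsum

theorem sInf_normSumOnSimplex [InnerProductSpace ℝ X] (hC : IsBiCone C)
    (hnz : ∃ p ∈ C, p.1 ≠ 0 ∧ p.2 ≠ 0) :
    sInf (normSumOnSimplex C) = (1 / 2) * sInf (normSumOnSpheres C) := by
  rw [← smul_eq_mul, ← Real.sInf_smul_of_nonneg (by norm_num)]
  refine csInf_eq_csInf_of_forall_exists_le (fun x hx => ?_)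
    (fun y hy => ⟨y, hC.half_smul_normSumOnSpheres_subset hy, le_rfl⟩)
  obtain ⟨y, hy, hyx⟩ := hC.exists_mem_normSumOnSpheres_le_two_mul hnz hx
  exact ⟨(1 / 2 : ℝ) • y, Set.smul_mem_smul_set hy, by rw [smul_eq_mul]; linarith⟩

end IsBiCone

end

theorem stmt5_general {X : Type*} [NormedAddCommGroup X] [InnerProductSpace ℝ X]
    (C : Set (X × X))
    (hscale : ∀ p ∈ C, ∀ t₁ t₂ : ℝ, 0 < t₁ → 0 < t₂ → (t₁ • p.1, t₂ • p.2) ∈ C)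
    (hnz : ∃ p ∈ C, p.1 ≠ 0 ∧ p.2 ≠ 0) :
    sInf {r : ℝ | ∃ p ∈ C, ‖p.1‖ + ‖p.2‖ = 1 ∧ r = ‖p.1 + p.2‖} =
      (1 / 2) * sInf {r : ℝ | ∃ p ∈ C, ‖p.1‖ = 1 ∧ ‖p.2‖ = 1 ∧ r = ‖p.1 + p.2‖} :=
  IsBiCone.sInf_normSumOnSimplex hscale hnz

theorem stmt5 {X : Type*} [NormedAddCommGroup X] [InnerProductSpace ℝ X]
    [FiniteDimensional ℝ X]
    (C : Set (X × X)) (hne : C.Nonempty) (hcl : IsClosed C)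
    (hscale : ∀ p ∈ C, ∀ t₁ t₂ : ℝ, 0 < t₁ → 0 < t₂ → (t₁ • p.1, t₂ • p.2) ∈ C)
    (hnz : ∃ p ∈ C, p.1 ≠ 0 ∧ p.2 ≠ 0) :
    sInf {r : ℝ | ∃ p ∈ C, ‖p.1‖ + ‖p.2‖ = 1 ∧ r = ‖p.1 + p.2‖} =
      (1 / 2) * sInf {r : ℝ | ∃ p ∈ C, ‖p.1‖ = 1 ∧ ‖p.2‖ = 1 ∧ r = ‖p.1 + p.2‖} :=
  stmt5_general C hscale hnz
end
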